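/- For the q-derivative D_q acting on the variable a, D_q^n { (as;q)_∞ / ((at;q)_∞ (aω;q)_∞) } = (t/(1-q))^n · (as;q)_∞/((at;q)_∞ (aω;q)_∞) · ∑_{k=0}^n (-1)^k q^{-binom(k,2)} ((q^{-n};q)_k (s/ω;q)_k (at;q)_k / ((as;q)_k (q;q)_k)) (ω q^n / t)^k. -/

import Mathlib

/-!
Write `F_k(a) = (a s q^k; q)_∞ / ((a t q^k; q)_∞ (a ω; q)_∞)`, so that
`F_k = F_0 · (at; q)_k / (as; q)_k`. Peeling the first factor off each infinite product gives
`(1 - q) D_q F_k = t q^k F_k + (ω - s q^k) F_{k+1}`, hence `D_q^n F_0 = ∑_k c_{n,k} F_k` with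
`(1 - q) c_{n+1,k+1} = t q^{k+1} c_{n,k+1} + (ω - s q^k) c_{n,k}`. This is the q-Pascal rule
`[n+1, k+1]_q = q^{k+1} [n, k+1]_q + [n, k]_q` in disguise, so
`c_{n,k} = (t / (1 - q))^n [n, k]_q (s/ω; q)_k (ω / t)^k`, and
`(q; q)_k [n, k]_q = (-1)^k q^{nk - binom(k,2)} (q^{-n}; q)_k` turns this into the stated sum.
-/

noncomputable def qPoch (x q : ℂ) (n : ℕ) : ℂ := ∏ j ∈ Finset.range n, (1 - x * q ^ j)

noncomputable def qPochInf (x q : ℂ) : ℂ := ∏' j : ℕ, (1 - x * q ^ j)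

noncomputable def qBinom (q : ℂ) (n k : ℕ) : ℂ := qPoch q q n / (qPoch q q k * qPoch q q (n - k))

noncomputable def Dq (q : ℂ) (f : ℂ → ℂ) : ℂ → ℂ := fun a => (f a - f (q * a)) / ((1 - q) * a)

noncomputable def Dqinv (q : ℂ) (f : ℂ → ℂ) : ℂ → ℂ := fun a => (f (q⁻¹ * a) - f a) / ((q⁻¹ - 1) * a)

noncomputable def mPoch {m : ℕ} (a : Fin m → ℂ) (q : ℂ) (k : ℕ) : ℂ := ∏ i, qPoch (a i) q k

noncomputable def phi {r : ℕ} (a : Fin (r + 1) → ℂ) (b : Fin r → ℂ) (q x y : ℂ) (n : ℕ) : ℂ :=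
  ∑ k ∈ Finset.range (n + 1), qBinom q n k * (mPoch a q k / mPoch b q k) * x ^ k * y ^ (n - k)

noncomputable def psi {r : ℕ} (a : Fin (r + 1) → ℂ) (b : Fin r → ℂ) (q x y : ℂ) (n : ℕ) : ℂ :=
  ∑ k ∈ Finset.range (n + 1), qBinom q n k * (mPoch a q k / mPoch b q k) *
    q ^ ((((k + 1).choose 2 : ℕ) : ℤ) - (n : ℤ) * (k : ℤ)) * x ^ k * y ^ (n - k)

open Finset

lemma one_sub_ne_zero_of_norm_lt_one {R : Type*} [NormedRing R] [NormOneClass R] {z : R}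
    (h : ‖z‖ < 1) : 1 - z ≠ 0 := by
  rw [sub_ne_zero]
  rintro rfl
  simp at h

lemma norm_mul_lt_one {R : Type*} [SeminormedRing R] {x y : R} (hx : ‖x‖ ≤ 1) (hy : ‖y‖ < 1) :
    ‖x * y‖ < 1 :=
  (norm_mul_le x y).trans_lt <| lt_of_le_of_lt (mul_le_of_le_one_left (norm_nonneg y) hx) hy

section QPochhammer

variable {q : ℂ}

lemma qPoch_succ (x : ℂ) (k : ℕ) : qPoch x q (k + 1) = qPoch x q k * (1 - x * q ^ k) :=
  prod_range_succ _ _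

lemma norm_mul_pow_lt_one {x : ℂ} (hq : ‖q‖ < 1) (hx : ‖x‖ < 1) (j : ℕ) : ‖x * q ^ j‖ < 1 := by
  rw [mul_comm]
  exact norm_mul_lt_one (by simpa using pow_le_one₀ (norm_nonneg q) hq.le) hx

lemma qPoch_ne_zero {x : ℂ} (hq : ‖q‖ < 1) (hx : ‖x‖ < 1) (k : ℕ) : qPoch x q k ≠ 0 :=
  prod_ne_zero_iff.mpr fun j _ => one_sub_ne_zero_of_norm_lt_one (norm_mul_pow_lt_one hq hx j)

lemma multipliable_one_sub_mul_pow (x : ℂ) (hq : ‖q‖ < 1) :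
    Multipliable fun j : ℕ => 1 - x * q ^ j := by
  simpa [sub_eq_add_neg] using multipliable_one_add_of_summable (f := fun j : ℕ => -(x * q ^ j))
    (by simpa using (summable_geometric_of_lt_one (norm_nonneg q) hq).mul_left ‖x‖)

lemma qPoch_mul_qPochInf (x : ℂ) (hq : ‖q‖ < 1) (k : ℕ) :
    qPoch x q k * qPochInf (x * q ^ k) q = qPochInf x q := by
  have h : Multipliable fun j : ℕ => 1 - x * q ^ (j + k) :=
    (multipliable_one_sub_mul_pow (x * q ^ k) hq).congr fun j => by ring
  have htail : qPochInf (x * q ^ k) q = ∏' j : ℕ, (1 - x * q ^ (j + k)) :=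
    tprod_congr fun j => by ring
  rw [htail]
  exact Multipliable.prod_mul_tprod_nat_mul' (f := fun j => 1 - x * q ^ j) h

lemma qPochInf_eq_one_sub_mul (x : ℂ) (hq : ‖q‖ < 1) :
    qPochInf x q = (1 - x) * qPochInf (x * q) q := by
  simpa [qPoch] using (qPoch_mul_qPochInf x hq 1).symm

end QPochhammer

noncomputable def pochRatio (q s t ω a : ℂ) : ℂ :=
  qPochInf (a * s) q / (qPochInf (a * t) q * qPochInf (a * ω) q)

section PochRatio

variable {q : ℂ} (s t ω a : ℂ)

lemma pochRatio_eq_mul_pochRatio_q_mul (hq : ‖q‖ < 1) :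
    pochRatio q s t ω a
      = (1 - a * s) / ((1 - a * t) * (1 - a * ω)) * pochRatio q s t ω (q * a) := by
  simp only [pochRatio, qPochInf_eq_one_sub_mul (a * _) hq]
  rw [show a * s * q = q * a * s by ring, show a * t * q = q * a * t by ring,
    show a * ω * q = q * a * ω by ring]
  simp only [div_eq_mul_inv, mul_inv]
  ring

lemma pochRatio_mul_q (hq : ‖q‖ < 1) :
    pochRatio q (s * q) (t * q) ω a = pochRatio q s t ω (q * a) / (1 - a * ω) := by
  simp only [pochRatio, qPochInf_eq_one_sub_mul (a * ω) hq]
  rw [show a * (s * q) = q * a * s by ring, show a * (t * q) = q * a * t by ring,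
    show a * ω * q = q * a * ω by ring]
  simp only [div_eq_mul_inv, mul_inv]
  ring

lemma Dq_pochRatio (hq : ‖q‖ < 1) (ha : a ≠ 0) (hat : 1 - a * t ≠ 0) (haω : 1 - a * ω ≠ 0) :
    Dq q (pochRatio q s t ω) a
      = t / (1 - q) * pochRatio q s t ω a
        + (ω - s) / (1 - q) * pochRatio q (s * q) (t * q) ω a := by
  have hq1 : 1 - q ≠ 0 := one_sub_ne_zero_of_norm_lt_one hq
  rw [Dq, pochRatio_mul_q s t ω a hq, pochRatio_eq_mul_pochRatio_q_mul s t ω a hq]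
  field_simp
  ring

lemma Dq_pochRatio_mul_pow (hq : ‖q‖ < 1) (ha : a ≠ 0) (hat : ‖a * t‖ < 1) (haω : ‖a * ω‖ < 1)
    (k : ℕ) :
    Dq q (pochRatio q (s * q ^ k) (t * q ^ k) ω) a
      = t * q ^ k / (1 - q) * pochRatio q (s * q ^ k) (t * q ^ k) ω a
        + (ω - s * q ^ k) / (1 - q) * pochRatio q (s * q ^ (k + 1)) (t * q ^ (k + 1)) ω a := by
  have hatk : 1 - a * (t * q ^ k) ≠ 0 :=
    one_sub_ne_zero_of_norm_lt_one (by rw [← mul_assoc]; exact norm_mul_pow_lt_one hq hat k)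
  rw [Dq_pochRatio _ _ ω a hq ha hatk (one_sub_ne_zero_of_norm_lt_one haω), pow_succ,
    ← mul_assoc, ← mul_assoc]

lemma pochRatio_mul_qPoch_div (hq : ‖q‖ < 1) (k : ℕ) (has : qPoch (a * s) q k ≠ 0)
    (hat : qPoch (a * t) q k ≠ 0) :
    pochRatio q s t ω a * (qPoch (a * t) q k / qPoch (a * s) q k)
      = pochRatio q (s * q ^ k) (t * q ^ k) ω a := by
  simp only [pochRatio, ← qPoch_mul_qPochInf (a * s) hq k, ← qPoch_mul_qPochInf (a * t) hq k,
    mul_assoc a]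
  rw [← mul_div_mul_left (qPochInf (a * (s * q ^ k)) q) _ (mul_ne_zero has hat)]
  ring

end PochRatio

theorem iterate_Dq_apply_eq_sum {q : ℂ} {S : Set ℂ} (hS : ∀ a ∈ S, q * a ∈ S)
    {f : ℕ → ℂ → ℂ} {α β : ℕ → ℂ}
    (hf : ∀ k, ∀ a ∈ S, Dq q (f k) a = α k * f k a + β k * f (k + 1) a)
    {c : ℕ → ℕ → ℂ} (hc₀ : c 0 0 = 1) (hc_top : ∀ n, c n (n + 1) = 0)
    (hc_zero : ∀ n, c (n + 1) 0 = α 0 * c n 0)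
    (hc_succ : ∀ n k, c (n + 1) (k + 1) = α (k + 1) * c n (k + 1) + β k * c n k) (n : ℕ) :
    ∀ a ∈ S, (Dq q)^[n] (f 0) a = ∑ k ∈ range (n + 1), c n k * f k a := by
  induction n with
  | zero => simp [hc₀]
  | succ n ih =>
    intro a ha
    have hlin : Dq q ((Dq q)^[n] (f 0)) a = ∑ k ∈ range (n + 1), c n k * Dq q (f k) a := by
      simp only [Dq, ih a ha, ih (q * a) (hS a ha), ← sum_sub_distrib, sum_div, ← mul_sub,
        mul_div_assoc]
    have hα : ∑ k ∈ range (n + 1), α k * c n k * f k a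
        = α 0 * c n 0 * f 0 a + ∑ k ∈ range (n + 1), α (k + 1) * c n (k + 1) * f (k + 1) a := by
      rw [sum_range_succ', sum_range_succ (fun k => α (k + 1) * c n (k + 1) * f (k + 1) a),
        hc_top, mul_zero, zero_mul, add_zero, add_comm]
    rw [Function.iterate_succ_apply', hlin, sum_range_succ' _ (n + 1), hc_zero]
    calc ∑ k ∈ range (n + 1), c n k * Dq q (f k) a
        = ∑ k ∈ range (n + 1), (α k * c n k * f k a + β k * c n k * f (k + 1) a) :=
          sum_congr rfl fun k _ => by rw [hf k a ha]; ring
      _ = _ := by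
          rw [sum_add_distrib, hα]
          simp only [hc_succ, add_mul, sum_add_distrib]
          ring

/-- `(q^{n-k+1}; q)_k = (q; q)_k [n, k]_q`; the integer exponents make it vanish for `k > n`,
where a natural-number exponent `n - j` would truncate. -/
noncomputable def qDescFactorial (q : ℂ) (n k : ℕ) : ℂ := ∏ j ∈ range k, (1 - q ^ ((n : ℤ) - j))

section QDescFactorial

variable (q : ℂ) (n k : ℕ)

lemma qDescFactorial_succ :
    qDescFactorial q n (k + 1) = qDescFactorial q n k * (1 - q ^ ((n : ℤ) - k)) :=
  prod_range_succ _ _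

lemma qDescFactorial_succ_succ :
    qDescFactorial q (n + 1) (k + 1) = (1 - q ^ (n + 1)) * qDescFactorial q n k := by
  rw [qDescFactorial, prod_range_succ']
  simp only [Nat.cast_add, Nat.cast_one, CharP.cast_eq_zero, sub_zero, add_sub_add_right_eq_sub]
  rw [mul_comm, qDescFactorial, ← Nat.cast_succ, zpow_natCast]

lemma qDescFactorial_self_succ : qDescFactorial q n (n + 1) = 0 := by
  simp [qDescFactorial_succ]

variable {q}

lemma qDescFactorial_pascal (hq : q ≠ 0) :
    qDescFactorial q (n + 1) (k + 1)
      = q ^ (k + 1) * qDescFactorial q n (k + 1) + (1 - q ^ (k + 1)) * qDescFactorial q n k := by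
  have hexp : q ^ (k + 1) * q ^ ((n : ℤ) - k) = q ^ (n + 1) := by
    rw [← zpow_natCast, ← zpow_add₀ hq, ← zpow_natCast]
    congr 1
    push_cast
    ring
  rw [qDescFactorial_succ_succ, qDescFactorial_succ]
  linear_combination qDescFactorial q n k * hexp

lemma qDescFactorial_eq_qPoch (hq : q ≠ 0) :
    qDescFactorial q n k
      = (-1) ^ k * q ^ (-(k.choose 2 : ℤ)) * qPoch (q ^ (-(n : ℤ))) q k * (q ^ n) ^ k := by
  induction k with
  | zero => simp [qDescFactorial, qPoch]
  | succ k ih =>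
    have hchoose : ((k + 1).choose 2 : ℤ) = k.choose 2 + k := by
      rw [Nat.choose_succ_succ', Nat.choose_one_right]
      push_cast
      ring
    rw [qDescFactorial_succ, ih, qPoch_succ, hchoose, neg_add, zpow_add₀ hq, zpow_sub₀ hq]
    simp only [zpow_neg, zpow_natCast]
    field_simp
    ring

end QDescFactorial

noncomputable def iterDqCoeff (q s t ω : ℂ) (n k : ℕ) : ℂ :=
  (t / (1 - q)) ^ n * (qDescFactorial q n k / qPoch q q k) * (qPoch (s / ω) q k * (ω / t) ^ k)

section IterDqCoeff

variable (q s t ω : ℂ) (n k : ℕ)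

lemma iterDqCoeff_zero_zero : iterDqCoeff q s t ω 0 0 = 1 := by
  simp [iterDqCoeff, qDescFactorial, qPoch]

lemma iterDqCoeff_self_succ : iterDqCoeff q s t ω n (n + 1) = 0 := by
  simp [iterDqCoeff, qDescFactorial_self_succ]

lemma iterDqCoeff_succ_zero :
    iterDqCoeff q s t ω (n + 1) 0 = t * q ^ 0 / (1 - q) * iterDqCoeff q s t ω n 0 := by
  simp only [iterDqCoeff, qDescFactorial, prod_range_zero, pow_succ]
  ring

variable {q t ω}

lemma iterDqCoeff_succ_succ (hq0 : q ≠ 0) (hq : ‖q‖ < 1) (ht : t ≠ 0) (hω : ω ≠ 0) :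
    iterDqCoeff q s t ω (n + 1) (k + 1)
      = t * q ^ (k + 1) / (1 - q) * iterDqCoeff q s t ω n (k + 1)
        + (ω - s * q ^ k) / (1 - q) * iterDqCoeff q s t ω n k := by
  have hq1 : 1 - q ≠ 0 := one_sub_ne_zero_of_norm_lt_one hq
  have hqk : qPoch q q k ≠ 0 := qPoch_ne_zero hq hq k
  have hqk1 : 1 - q * q ^ k ≠ 0 := by
    simpa [qPoch_succ, hqk, mul_comm] using qPoch_ne_zero hq hq (k + 1)
  simp only [iterDqCoeff, qDescFactorial_pascal n k hq0, qPoch_succ]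
  rw [pow_succ' q k, pow_succ (t / (1 - q)), pow_succ (ω / t)]
  field_simp

end IterDqCoeff

/-- `D_q^n {(as;q)_∞/((at;q)_∞(aω;q)_∞)}`. -/
theorem stmt10 (q a s t ω : ℂ) (hq0 : q ≠ 0) (hq1 : ‖q‖ < 1) (ha : a ≠ 0)
    (ht : t ≠ 0) (hω : ω ≠ 0) (hat : ‖a * t‖ < 1)
    (haω : ‖a * ω‖ < 1) (n : ℕ)
    (hs : ∀ k ≤ n, qPoch (a * s) q k ≠ 0) :
    (Dq q)^[n] (fun a => qPochInf (a * s) q / (qPochInf (a * t) q * qPochInf (a * ω) q)) a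
      = (t / (1 - q)) ^ n
          * (qPochInf (a * s) q / (qPochInf (a * t) q * qPochInf (a * ω) q))
          * ∑ k ∈ Finset.range (n + 1),
              (-1) ^ k * q ^ (-((k.choose 2 : ℕ) : ℤ))
                * (qPoch (q ^ (-(n : ℤ))) q k * qPoch (s / ω) q k * qPoch (a * t) q k
                    / (qPoch (a * s) q k * qPoch q q k))
                * (ω * q ^ n / t) ^ k := by
  set S : Set ℂ := {b | b ≠ 0 ∧ ‖b * t‖ < 1 ∧ ‖b * ω‖ < 1}
  have hS : ∀ b ∈ S, q * b ∈ S := by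
    rintro b ⟨hb, hbt, hbω⟩
    refine ⟨mul_ne_zero hq0 hb, ?_, ?_⟩ <;> rw [mul_assoc]
    exacts [norm_mul_lt_one hq1.le hbt, norm_mul_lt_one hq1.le hbω]
  have key := iterate_Dq_apply_eq_sum hS
    (fun k b ⟨hb, hbt, hbω⟩ => Dq_pochRatio_mul_pow s t ω b hq1 hb hbt hbω k)
    (iterDqCoeff_zero_zero q s t ω) (iterDqCoeff_self_succ q s t ω)
    (iterDqCoeff_succ_zero q s t ω) (fun n k => iterDqCoeff_succ_succ s n k hq0 hq1 ht hω)
    n a ⟨ha, hat, haω⟩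
  simp only [pow_zero, mul_one] at key
  change (Dq q)^[n] (pochRatio q s t ω) a = _
  rw [key, mul_sum]
  refine sum_congr rfl fun k hk => ?_
  rw [← pochRatio_mul_qPoch_div s t ω a hq1 k (hs k (by simpa [Nat.lt_succ_iff] using hk))
    (qPoch_ne_zero hq1 hat k), iterDqCoeff, qDescFactorial_eq_qPoch n k hq0]
  unfold pochRatio
  ring
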